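/- Assume that α : [0,1] → ℝ is bounded and satisfies the regularity condition: there exist constants c_1, c_2 > 0 such that c_1 α(s) ≤ α(t) ≤ c_2 α(s) whenever 0 ≤ s ≤ t ≤ min(2s, 1). Then R^{α(·)} is a bounded operator on L_1[0,1] if and only if ∫₀¹ α(t) t^{α(t)−1} dt < ∞. -/

import Mathlib

/-!
Since `α` is bounded, `Γ(α(t) + 1)` stays between two positive constants, so
`1 / Γ(α(t)) ≍ α(t)`.

By Tonelli, the `L₁` norm of an integral operator is controlled by the supremum over `s` of the
column integrals `∫ |k(t, s)| dt` of its kernel. For `R^{α(·)}` split the column integral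
at `t = 2s`. On `(s, 2s]` the regularity condition pins `α(t)` between `c₁ α(s)` and `c₂ α(s)`,
so the kernel is at most `c₂ α(s) (t - s)^{c₁ α(s) - 1}`, whose integral `≲ c₂ / c₁` is uniform
in `s`. For `t > 2s` one has `t - s ≍ t`, and the column integral is at most a multiple of
`∫₀¹ α(t) t^{α(t)-1} dt`.

Conversely, `f = ε⁻¹ 𝟙_(0,ε]` has norm at most `1` and `R^{α(·)} f(t) ≳ α(t) t^{α(t)-1}` on
`(2ε, 1]`, with a constant independent of `ε`; letting `ε → 0` gives the finiteness of the
integral.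
-/

open MeasureTheory Real Set Filter
open scoped ENNReal NNReal

/-- The Riemann–Liouville operator of variable order `α(·)`:
`(R^{α(·)}f)(t) = (1/Γ(α(t))) ∫₀ᵗ (t−s)^{α(t)−1} f(s) ds`. -/
noncomputable def RL (α f : ℝ → ℝ) (t : ℝ) : ℝ :=
  (1 / Real.Gamma (α t)) * ∫ s in Set.Ioc (0 : ℝ) t, (t - s) ^ (α t - 1) * f s

namespace Real

theorem measurable_Gamma : Measurable Gamma :=
  measurable_of_countable_not_continuousAt <|
    (countable_range fun n : ℕ => -(n : ℝ)).mono fun x hx => by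
      by_contra h
      exact hx (differentiableAt_Gamma fun m hm => h ⟨m, hm.symm⟩).continuousAt

theorem exists_pos_bounds_one_div_Gamma (B : ℝ) :
    ∃ m M : ℝ, 0 < m ∧ 0 < M ∧
      ∀ a, 0 < a → a ≤ B → m * a ≤ 1 / Gamma a ∧ 1 / Gamma a ≤ M * a := by
  have hpos : ∀ x ∈ Icc 1 (B + 1), 0 < Gamma x :=
    fun x hx => Gamma_pos_of_pos (by linarith [hx.1])
  have hcont : ContinuousOn Gamma (Icc 1 (B + 1)) :=
    differentiableOn_Gamma_Ioi.continuousOn.mono fun x hx => show 0 < x by linarith [hx.1]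
  obtain ⟨U, hU⟩ := isCompact_Icc.exists_bound_of_continuousOn hcont
  obtain ⟨V, hV⟩ := isCompact_Icc.exists_bound_of_continuousOn
    (hcont.inv₀ fun x hx => (hpos x hx).ne')
  refine ⟨(max U 1)⁻¹, max V 1, by positivity, by positivity, fun a ha haB => ?_⟩
  have hmem : a + 1 ∈ Icc 1 (B + 1) := ⟨by linarith, by linarith⟩
  have hΓ := hpos _ hmem
  have hrec : 1 / Gamma a = a * (Gamma (a + 1))⁻¹ := by
    rw [Gamma_add_one ha.ne']
    field_simp
  have hU' : Gamma (a + 1) ≤ max U 1 :=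
    (le_abs_self _).trans ((hU _ hmem).trans (le_max_left _ _))
  have hV' : (Gamma (a + 1))⁻¹ ≤ max V 1 :=
    (le_abs_self _).trans ((hV _ hmem).trans (le_max_left _ _))
  rw [hrec, mul_comm _ a, mul_comm _ a]
  exact ⟨mul_le_mul_of_nonneg_left (inv_anti₀ hΓ hU') ha.le,
    mul_le_mul_of_nonneg_left hV' ha.le⟩

theorem rpow_sub_one_le_two_mul_rpow_sub_one {a t u : ℝ} (ha : 0 < a) (ht : 0 < t)
    (htu : t ≤ 2 * u) (hut : u ≤ t) : u ^ (a - 1) ≤ 2 * t ^ (a - 1) := by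
  have hu : 0 < u := by linarith
  rcases le_or_gt 1 a with h | h
  · linarith [rpow_le_rpow hu.le hut (by linarith : 0 ≤ a - 1), rpow_nonneg ht.le (a - 1)]
  · calc u ^ (a - 1) ≤ (t / 2) ^ (a - 1) :=
          rpow_le_rpow_of_nonpos (by positivity) (by linarith) (by linarith)
      _ = 2 ^ (1 - a) * t ^ (a - 1) := by
        rw [div_rpow ht.le zero_le_two, div_eq_mul_inv, ← rpow_neg zero_le_two, neg_sub, mul_comm]
      _ ≤ 2 * t ^ (a - 1) := by
        gcongr
        exact (rpow_le_rpow_of_exponent_le one_le_two (by linarith : 1 - a ≤ 1)).trans_eq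
          (rpow_one 2)

theorem rpow_sub_one_le_two_rpow_mul_rpow_sub_one {a b t u : ℝ} (hb : 0 ≤ b) (hab : a ≤ b + 1)
    (ht : 0 < t) (htu : t ≤ 2 * u) (hut : u ≤ t) : t ^ (a - 1) ≤ 2 ^ b * u ^ (a - 1) := by
  have hu : 0 < u := by linarith
  rcases le_or_gt 1 a with h | h
  · calc t ^ (a - 1) ≤ (2 * u) ^ (a - 1) := rpow_le_rpow ht.le htu (by linarith)
      _ = 2 ^ (a - 1) * u ^ (a - 1) := mul_rpow zero_le_two hu.le
      _ ≤ 2 ^ b * u ^ (a - 1) := by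
        gcongr
        · exact one_le_two
        · linarith
  · calc t ^ (a - 1) ≤ u ^ (a - 1) := rpow_le_rpow_of_nonpos hu hut (by linarith)
      _ ≤ 2 ^ b * u ^ (a - 1) :=
          le_mul_of_one_le_left (rpow_nonneg hu.le _) (one_le_rpow one_le_two hb)

end Real

theorem lintegral_Ioc_sub_rpow (s : ℝ) {L p : ℝ} (hL : 0 ≤ L) (hp : 0 < p) :
    ∫⁻ t in Ioc s (s + L), ENNReal.ofReal ((t - s) ^ (p - 1)) = ENNReal.ofReal (L ^ p / p) := by
  have hint : IntervalIntegrable (fun t => (t - s) ^ (p - 1)) volume s (s + L) := by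
    simpa [add_comm] using (intervalIntegral.intervalIntegrable_rpow' (r := p - 1) (a := 0)
      (b := L) (by linarith)).comp_sub_right s
  rw [← ofReal_integral_eq_lintegral_ofReal hint.1 ?_,
    ← intervalIntegral.integral_of_le (by linarith),
    intervalIntegral.integral_comp_sub_right (fun u => u ^ (p - 1)),
    integral_rpow (Or.inl (by linarith))]
  · simp [zero_rpow hp.ne']
  · filter_upwards [ae_restrict_mem measurableSet_Ioc] with t ht
    exact rpow_nonneg (by linarith [ht.1]) _

theorem eLpNorm_one_integral_mul_le {X Y : Type*} [MeasurableSpace X] [MeasurableSpace Y]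
    {μ : Measure X} {ν : Measure Y} [SFinite μ] [SFinite ν] {k : X → Y → ℝ}
    (hk : AEMeasurable (Function.uncurry k) (μ.prod ν)) {f : Y → ℝ} (hf : AEMeasurable f ν)
    {C : ℝ≥0∞} (hC : ∀ᵐ y ∂ν, ∫⁻ x, ‖k x y‖ₑ ∂μ ≤ C) :
    eLpNorm (fun x => ∫ y, k x y * f y ∂ν) 1 μ ≤ C * eLpNorm f 1 ν := by
  simp only [eLpNorm_one_eq_lintegral_enorm]
  calc ∫⁻ x, ‖∫ y, k x y * f y ∂ν‖ₑ ∂μ ≤ ∫⁻ x, ∫⁻ y, ‖k x y‖ₑ * ‖f y‖ₑ ∂ν ∂μ :=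
        lintegral_mono fun x =>
          (enorm_integral_le_lintegral_enorm _).trans_eq (by simp_rw [enorm_mul])
    _ = ∫⁻ y, ∫⁻ x, ‖k x y‖ₑ * ‖f y‖ₑ ∂μ ∂ν :=
        lintegral_lintegral_swap (hk.enorm.mul hf.comp_snd.enorm)
    _ = ∫⁻ y, (∫⁻ x, ‖k x y‖ₑ ∂μ) * ‖f y‖ₑ ∂ν :=
        lintegral_congr fun y => lintegral_mul_const' _ _ enorm_ne_top
    _ ≤ ∫⁻ y, C * ‖f y‖ₑ ∂ν := lintegral_mono_ae (hC.mono fun y hy => mul_le_mul_left hy _)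
    _ = C * ∫⁻ y, ‖f y‖ₑ ∂ν := lintegral_const_mul'' C hf.enorm

theorem setLIntegral_Ioc_le_of_forall_lt {f : ℝ → ℝ≥0∞} {a b : ℝ} {C : ℝ≥0∞}
    (h : ∀ c, a < c → ∫⁻ x in Ioc c b, f x ≤ C) : ∫⁻ x in Ioc a b, f x ≤ C := by
  have hU : Ioc a b = ⋃ n : ℕ, Ioc (a + 1 / (n + 1)) b := by
    ext x
    simp only [mem_iUnion, mem_Ioc]
    constructor
    · rintro ⟨hax, hxb⟩
      obtain ⟨n, hn⟩ := exists_nat_one_div_lt (sub_pos.2 hax)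
      exact ⟨n, by linarith, hxb⟩
    · rintro ⟨n, hx, hxb⟩
      exact ⟨lt_trans (by simp; positivity) hx, hxb⟩
  have hmono : Monotone fun n : ℕ => Ioc (a + 1 / (n + 1)) b := fun m n hmn =>
    Ioc_subset_Ioc_left (by gcongr)
  rw [hU, setLIntegral_iUnion_of_directed _ hmono.directed_le]
  exact iSup_le fun n => h _ (by simp; positivity)

noncomputable def rlKernel (α : ℝ → ℝ) (t s : ℝ) : ℝ :=
  (Ioc 0 t).indicator (fun s => 1 / Gamma (α t) * (t - s) ^ (α t - 1)) s

theorem measurable_rlKernel {α : ℝ → ℝ} (hα : Measurable α) :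
    Measurable (Function.uncurry (rlKernel α)) := by
  have hset : MeasurableSet {p : ℝ × ℝ | p.2 ∈ Ioc 0 p.1} :=
    (measurableSet_lt measurable_const measurable_snd).inter
      (measurableSet_le measurable_snd measurable_fst)
  refine Measurable.ite hset ?_ measurable_const
  have hα₁ : Measurable fun p : ℝ × ℝ => α p.1 := hα.comp measurable_fst
  exact (measurable_const.div (measurable_Gamma.comp hα₁)).mul
    ((measurable_fst.sub measurable_snd).pow (hα₁.sub measurable_const))

theorem RL_eq_integral_rlKernel (α f : ℝ → ℝ) {t : ℝ} (ht : t ≤ 1) :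
    RL α f t = ∫ s in Icc 0 1, rlKernel α t s * f s := by
  simp_rw [rlKernel, ← indicator_mul_left]
  rw [setIntegral_indicator measurableSet_Ioc, inter_eq_right.mpr (Ioc_subset_Icc_self.trans
    (Icc_subset_Icc_right ht)), RL, ← integral_const_mul]
  simp_rw [mul_assoc]

section RiemannLiouville

variable {α : ℝ → ℝ} {B M c₁ c₂ : ℝ}

theorem setLIntegral_Ioc_min_two_mul_le (hB : ∀ t ∈ Icc (0 : ℝ) 1, α t ≤ B) (hM₀ : 0 ≤ M)
    (hM : ∀ a, 0 < a → a ≤ B → 1 / Gamma a ≤ M * a) (hc₁ : 0 < c₁)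
    (hreg : ∀ s t : ℝ, 0 ≤ s → s ≤ t → t ≤ min (2 * s) 1 →
      c₁ * α s ≤ α t ∧ α t ≤ c₂ * α s)
    {s : ℝ} (hs : 0 < s) (hαs : 0 < α s) :
    ∫⁻ t in Ioc s (min (2 * s) 1), ‖1 / Gamma (α t) * (t - s) ^ (α t - 1)‖ₑ ≤
      ENNReal.ofReal (M * c₂ / c₁) := by
  set p := c₁ * α s
  have hp : 0 < p := mul_pos hc₁ hαs
  have hpt : ∀ t ∈ Ioc s (min (2 * s) 1), ‖1 / Gamma (α t) * (t - s) ^ (α t - 1)‖ₑ ≤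
      ENNReal.ofReal (M * c₂ * α s) * ENNReal.ofReal ((t - s) ^ (p - 1)) := by
    rintro t ⟨hst, hts⟩
    obtain ⟨hlow, hup⟩ := hreg s t hs.le hst.le hts
    have hαt : 0 < α t := hp.trans_le hlow
    have ht1 : t ≤ 1 := hts.trans (min_le_right _ _)
    have hΓ₀ : 0 ≤ 1 / Gamma (α t) := (one_div_pos.2 (Gamma_pos_of_pos hαt)).le
    have hΓ : 1 / Gamma (α t) ≤ M * c₂ * α s := (hM _ hαt (hB t ⟨by linarith, ht1⟩)).trans
      (by rw [mul_assoc]; exact mul_le_mul_of_nonneg_left hup hM₀)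
    have hrpow : (t - s) ^ (α t - 1) ≤ (t - s) ^ (p - 1) :=
      rpow_le_rpow_of_exponent_ge (by linarith) (by linarith) (by linarith)
    rw [Real.enorm_of_nonneg (by positivity), ← ENNReal.ofReal_mul' (by positivity)]
    exact ENNReal.ofReal_le_ofReal
      (mul_le_mul hΓ hrpow (by positivity) (hΓ₀.trans hΓ))
  calc _ ≤ ∫⁻ t in Ioc s (min (2 * s) 1),
        ENNReal.ofReal (M * c₂ * α s) * ENNReal.ofReal ((t - s) ^ (p - 1)) :=
        setLIntegral_mono' measurableSet_Ioc hpt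
    _ ≤ ∫⁻ t in Ioc s (s + 1),
        ENNReal.ofReal (M * c₂ * α s) * ENNReal.ofReal ((t - s) ^ (p - 1)) :=
        lintegral_mono_set (Ioc_subset_Ioc_right (by linarith [min_le_right (2 * s) 1]))
    _ = ENNReal.ofReal (M * c₂ * α s) * ENNReal.ofReal (1 / p) := by
        rw [lintegral_const_mul' _ _ ENNReal.ofReal_ne_top,
          lintegral_Ioc_sub_rpow s zero_le_one hp, one_rpow]
    _ = ENNReal.ofReal (M * c₂ / c₁) := by
        rw [← ENNReal.ofReal_mul' (by positivity)]
        congr 1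
        field_simp
        simp only [p]
        ring

theorem setLIntegral_Ioc_two_mul_le (hpos : ∀ᵐ t ∂(volume.restrict (Icc (0 : ℝ) 1)), 0 < α t)
    (hB : ∀ t ∈ Icc (0 : ℝ) 1, α t ≤ B) (hM : ∀ a, 0 < a → a ≤ B → 1 / Gamma a ≤ M * a)
    {s : ℝ} (hs : 0 ≤ s) :
    ∫⁻ t in Ioc (2 * s) 1, ‖1 / Gamma (α t) * (t - s) ^ (α t - 1)‖ₑ ≤
      ENNReal.ofReal (2 * M) * ∫⁻ t in Ioc 0 1, ENNReal.ofReal (α t * t ^ (α t - 1)) := by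
  have hsub : Ioc (2 * s) 1 ⊆ Icc 0 1 :=
    Ioc_subset_Icc_self.trans (Icc_subset_Icc_left (by linarith))
  calc _ ≤ ∫⁻ t in Ioc (2 * s) 1,
        ENNReal.ofReal (2 * M) * ENNReal.ofReal (α t * t ^ (α t - 1)) := by
        refine lintegral_mono_ae ?_
        filter_upwards [ae_restrict_of_ae_restrict_of_subset hsub hpos,
          ae_restrict_mem measurableSet_Ioc] with t hαt ⟨hst, ht1⟩
        have hΓ₀ : 0 ≤ 1 / Gamma (α t) := (one_div_pos.2 (Gamma_pos_of_pos hαt)).le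
        have hΓ := hM _ hαt (hB t ⟨by linarith, ht1⟩)
        have hrpow : (t - s) ^ (α t - 1) ≤ 2 * t ^ (α t - 1) :=
          rpow_sub_one_le_two_mul_rpow_sub_one hαt (by linarith) (by linarith) (by linarith)
        rw [Real.enorm_of_nonneg (mul_nonneg hΓ₀ (rpow_nonneg (by linarith) _)),
          ← ENNReal.ofReal_mul' (mul_nonneg hαt.le (rpow_nonneg (by linarith) _))]
        refine ENNReal.ofReal_le_ofReal ?_
        calc 1 / Gamma (α t) * (t - s) ^ (α t - 1) ≤ M * α t * (2 * t ^ (α t - 1)) :=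
              mul_le_mul hΓ hrpow (rpow_nonneg (by linarith) _) (hΓ₀.trans hΓ)
          _ = 2 * M * (α t * t ^ (α t - 1)) := by ring
    _ = ENNReal.ofReal (2 * M) * ∫⁻ t in Ioc (2 * s) 1, ENNReal.ofReal (α t * t ^ (α t - 1)) :=
        lintegral_const_mul' _ _ ENNReal.ofReal_ne_top
    _ ≤ _ := mul_le_mul_right (lintegral_mono_set (Ioc_subset_Ioc_left (by linarith))) _

theorem lintegral_enorm_rlKernel_le (hpos : ∀ᵐ t ∂(volume.restrict (Icc (0 : ℝ) 1)), 0 < α t)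
    (hB : ∀ t ∈ Icc (0 : ℝ) 1, α t ≤ B) (hM₀ : 0 ≤ M)
    (hM : ∀ a, 0 < a → a ≤ B → 1 / Gamma a ≤ M * a) (hc₁ : 0 < c₁)
    (hreg : ∀ s t : ℝ, 0 ≤ s → s ≤ t → t ≤ min (2 * s) 1 →
      c₁ * α s ≤ α t ∧ α t ≤ c₂ * α s)
    {s : ℝ} (hαs : 0 < α s) :
    ∫⁻ t in Icc 0 1, ‖rlKernel α t s‖ₑ ≤ ENNReal.ofReal (M * c₂ / c₁) +
      ENNReal.ofReal (2 * M) * ∫⁻ t in Ioc 0 1, ENNReal.ofReal (α t * t ^ (α t - 1)) := by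
  rcases le_or_gt s 0 with hs | hs
  · simp [rlKernel, hs.not_gt]
  set g := fun t => ‖1 / Gamma (α t) * (t - s) ^ (α t - 1)‖ₑ
  have hker : ∀ t, ‖rlKernel α t s‖ₑ = (Ici s).indicator g t := by
    intro t
    by_cases hst : s ≤ t
    · rw [indicator_of_mem (mem_Ici.2 hst), rlKernel, indicator_of_mem (mem_Ioc.2 ⟨hs, hst⟩)]
    · rw [indicator_of_notMem (notMem_Ici.2 (not_le.1 hst)), rlKernel,
        indicator_of_notMem fun h => hst (mem_Ioc.1 h).2, enorm_zero]
  calc ∫⁻ t in Icc 0 1, ‖rlKernel α t s‖ₑ = ∫⁻ t in Ici s ∩ Icc 0 1, g t := by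
        simp_rw [hker]
        exact setLIntegral_indicator measurableSet_Ici g
    _ = ∫⁻ t in Ioc s 1, g t := by
        rw [show Ici s ∩ Icc 0 1 = Icc s 1 from
          ext fun t => ⟨fun h => ⟨h.1, h.2.2⟩, fun h => ⟨h.1, hs.le.trans h.1, h.2⟩⟩]
        exact setLIntegral_congr Ioc_ae_eq_Icc.symm
    _ ≤ ∫⁻ t in Ioc s (min (2 * s) 1) ∪ Ioc (2 * s) 1, g t :=
        lintegral_mono_set <| by
          rintro t ⟨hst, ht1⟩
          rcases le_or_gt t (2 * s) with h | h
          exacts [Or.inl ⟨hst, le_min h ht1⟩, Or.inr ⟨h, ht1⟩]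
    _ ≤ _ := (lintegral_union_le _ _ _).trans (add_le_add
        (setLIntegral_Ioc_min_two_mul_le hB hM₀ hM hc₁ hreg hs hαs)
        (setLIntegral_Ioc_two_mul_le hpos hB hM hs.le))

theorem eLpNorm_RL_le (hα : Measurable α)
    (hpos : ∀ᵐ t ∂(volume.restrict (Icc (0 : ℝ) 1)), 0 < α t)
    (hB : ∀ t ∈ Icc (0 : ℝ) 1, α t ≤ B) (hM₀ : 0 ≤ M)
    (hM : ∀ a, 0 < a → a ≤ B → 1 / Gamma a ≤ M * a) (hc₁ : 0 < c₁)
    (hreg : ∀ s t : ℝ, 0 ≤ s → s ≤ t → t ≤ min (2 * s) 1 →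
      c₁ * α s ≤ α t ∧ α t ≤ c₂ * α s)
    {f : ℝ → ℝ} (hf : AEStronglyMeasurable f (volume.restrict (Icc 0 1))) :
    eLpNorm (RL α f) 1 (volume.restrict (Icc 0 1)) ≤
      (ENNReal.ofReal (M * c₂ / c₁) + ENNReal.ofReal (2 * M) *
        ∫⁻ t in Ioc 0 1, ENNReal.ofReal (α t * t ^ (α t - 1))) *
        eLpNorm f 1 (volume.restrict (Icc 0 1)) := by
  have hRL : RL α f =ᵐ[volume.restrict (Icc 0 1)]
      fun t => ∫ s in Icc 0 1, rlKernel α t s * f s := by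
    filter_upwards [ae_restrict_mem measurableSet_Icc] with t ht
    exact RL_eq_integral_rlKernel α f ht.2
  rw [eLpNorm_congr_ae hRL]
  refine eLpNorm_one_integral_mul_le (measurable_rlKernel hα).aemeasurable hf.aemeasurable ?_
  filter_upwards [hpos] with s hαs
  exact lintegral_enorm_rlKernel_le hpos hB hM₀ hM hc₁ hreg hαs

theorem one_div_Gamma_mul_rpow_le_RL_indicator {b ε t : ℝ} (hb : 0 ≤ b)
    (hαt : 0 < α t) (hαb : α t ≤ b + 1) (hε : 0 < ε) (hεt : 2 * ε ≤ t) :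
    1 / Gamma (α t) * t ^ (α t - 1) ≤ 2 ^ b * RL α ((Ioc 0 ε).indicator fun _ => ε⁻¹) t := by
  have ht : 0 < t := by linarith
  have hint : IntegrableOn (fun s => 2 ^ b * ((t - s) ^ (α t - 1) * ε⁻¹)) (Ioc 0 ε) := by
    refine (ContinuousOn.integrableOn_Icc ?_).mono_set Ioc_subset_Icc_self
    exact continuousOn_const.mul (((continuousOn_const.sub continuousOn_id).rpow_const
      fun s hs => Or.inl (by linarith [hs.2] : t - s ≠ 0)).mul continuousOn_const)
  have hlow : t ^ (α t - 1) ≤ ∫ s in Ioc 0 ε, 2 ^ b * ((t - s) ^ (α t - 1) * ε⁻¹) := by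
    refine le_trans (le_of_eq ?_) (setIntegral_ge_of_const_le_real (c := t ^ (α t - 1) * ε⁻¹)
      measurableSet_Ioc measure_Ioc_lt_top.ne (fun s hs => ?_) hint)
    · rw [Real.volume_real_Ioc_of_le hε.le, sub_zero, mul_assoc, inv_mul_cancel₀ hε.ne', mul_one]
    · rw [← mul_assoc]
      gcongr
      exact rpow_sub_one_le_two_rpow_mul_rpow_sub_one hb hαb ht (by linarith [hs.2])
        (by linarith [hs.1])
  have hRL : RL α ((Ioc 0 ε).indicator fun _ => ε⁻¹) t =
      1 / Gamma (α t) * ∫ s in Ioc 0 ε, (t - s) ^ (α t - 1) * ε⁻¹ := by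
    have hmul : (fun s => (t - s) ^ (α t - 1) * (Ioc 0 ε).indicator (fun _ => ε⁻¹) s) =
        (Ioc 0 ε).indicator fun s => (t - s) ^ (α t - 1) * ε⁻¹ :=
      funext fun s => (indicator_mul_right (Ioc 0 ε) (fun s => (t - s) ^ (α t - 1)) _).symm
    rw [RL, hmul, setIntegral_indicator measurableSet_Ioc,
      inter_eq_right.mpr (Ioc_subset_Ioc_right (by linarith))]
  rw [hRL, mul_left_comm, ← integral_const_mul]
  exact mul_le_mul_of_nonneg_left hlow (one_div_pos.2 (Gamma_pos_of_pos hαt)).le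

theorem setLIntegral_Ioc_le_of_RL_bounded {m C : ℝ}
    (hpos : ∀ᵐ t ∂(volume.restrict (Icc (0 : ℝ) 1)), 0 < α t) (hB₀ : 0 ≤ B)
    (hB : ∀ t ∈ Icc (0 : ℝ) 1, α t ≤ B) (hm₀ : 0 < m)
    (hm : ∀ a, 0 < a → a ≤ B → m * a ≤ 1 / Gamma a)
    (hbound : ∀ f : ℝ → ℝ, MemLp f 1 (volume.restrict (Icc (0 : ℝ) 1)) →
      eLpNorm (RL α f) 1 (volume.restrict (Icc (0 : ℝ) 1)) ≤
        ENNReal.ofReal C * eLpNorm f 1 (volume.restrict (Icc (0 : ℝ) 1)))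
    {c : ℝ} (hc : 0 < c) :
    ∫⁻ t in Ioc c 1, ENNReal.ofReal (α t * t ^ (α t - 1)) ≤
      ENNReal.ofReal (2 ^ B / m) * ENNReal.ofReal C := by
  obtain ⟨ε, hε, rfl⟩ : ∃ ε, 0 < ε ∧ c = 2 * ε := ⟨c / 2, half_pos hc, by ring⟩
  set f : ℝ → ℝ := (Ioc 0 ε).indicator fun _ => ε⁻¹
  have hf : MemLp f 1 (volume.restrict (Icc 0 1)) :=
    memLp_indicator_const 1 measurableSet_Ioc _ (Or.inr (measure_ne_top _ _))
  have hf₁ : eLpNorm f 1 (volume.restrict (Icc 0 1)) ≤ 1 := by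
    refine (eLpNorm_indicator_const_le _ _).trans ?_
    rw [ENNReal.toReal_one, div_one, ENNReal.rpow_one]
    calc ‖ε⁻¹‖ₑ * volume.restrict (Icc 0 1) (Ioc 0 ε) ≤ ‖ε⁻¹‖ₑ * volume (Ioc 0 ε) :=
          mul_le_mul_right (Measure.restrict_apply_le _ _) _
      _ = 1 := by
          rw [Real.volume_Ioc, sub_zero, Real.enorm_of_nonneg (by positivity),
            ← ENNReal.ofReal_mul (by positivity), inv_mul_cancel₀ hε.ne', ENNReal.ofReal_one]
  have hsub : Ioc (2 * ε) 1 ⊆ Icc 0 1 :=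
    Ioc_subset_Icc_self.trans (Icc_subset_Icc_left (by positivity))
  calc ∫⁻ t in Ioc (2 * ε) 1, ENNReal.ofReal (α t * t ^ (α t - 1))
      ≤ ∫⁻ t in Ioc (2 * ε) 1, ENNReal.ofReal (2 ^ B / m) * ‖RL α f t‖ₑ := by
        refine lintegral_mono_ae ?_
        filter_upwards [ae_restrict_of_ae_restrict_of_subset hsub hpos,
          ae_restrict_mem measurableSet_Ioc] with t hαt ht
        have hΓ : α t ≤ m⁻¹ * (1 / Gamma (α t)) := by
          rw [le_inv_mul_iff₀ hm₀]
          exact hm _ hαt (hB t (hsub ht))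
        have hRL := one_div_Gamma_mul_rpow_le_RL_indicator hB₀ hαt (by linarith [hB t (hsub ht)])
          hε ht.1.le
        calc ENNReal.ofReal (α t * t ^ (α t - 1))
            ≤ ENNReal.ofReal (m⁻¹ * (1 / Gamma (α t) * t ^ (α t - 1))) := by
              rw [← mul_assoc]
              exact ENNReal.ofReal_le_ofReal
                (mul_le_mul_of_nonneg_right hΓ (rpow_nonneg (hsub ht).1 _))
          _ ≤ ENNReal.ofReal (m⁻¹ * (2 ^ B * RL α f t)) :=
              ENNReal.ofReal_le_ofReal (mul_le_mul_of_nonneg_left hRL (by positivity))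
          _ = ENNReal.ofReal (2 ^ B / m * RL α f t) := by ring_nf
          _ ≤ ENNReal.ofReal (2 ^ B / m) * ‖RL α f t‖ₑ := by
              rw [ENNReal.ofReal_mul (by positivity)]
              exact mul_le_mul_right (ofReal_le_enorm _) _
    _ = ENNReal.ofReal (2 ^ B / m) * ∫⁻ t in Ioc (2 * ε) 1, ‖RL α f t‖ₑ :=
        lintegral_const_mul' _ _ ENNReal.ofReal_ne_top
    _ ≤ ENNReal.ofReal (2 ^ B / m) * eLpNorm (RL α f) 1 (volume.restrict (Icc 0 1)) := by
        rw [eLpNorm_one_eq_lintegral_enorm]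
        exact mul_le_mul_right (lintegral_mono_set hsub) _
    _ ≤ ENNReal.ofReal (2 ^ B / m) * ENNReal.ofReal C := by
        refine mul_le_mul_right ((hbound f hf).trans ?_) _
        simpa using mul_le_mul_right hf₁ (ENNReal.ofReal C)

end RiemannLiouville

theorem stmt_5_general (α : ℝ → ℝ) (hα : Measurable α)
    (hpos : ∀ᵐ t ∂(volume.restrict (Set.Icc (0 : ℝ) 1)), 0 < α t)
    (hbdd : ∃ B : ℝ, ∀ t ∈ Set.Icc (0 : ℝ) 1, α t ≤ B)
    (c₁ c₂ : ℝ) (hc₁ : 0 < c₁)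
    (hreg : ∀ s t : ℝ, 0 ≤ s → s ≤ t → t ≤ min (2 * s) 1 →
      c₁ * α s ≤ α t ∧ α t ≤ c₂ * α s) :
    (∃ C : ℝ, 0 < C ∧
        ∀ f : ℝ → ℝ, MemLp f 1 (volume.restrict (Set.Icc (0 : ℝ) 1)) →
          eLpNorm (RL α f) 1 (volume.restrict (Set.Icc (0 : ℝ) 1)) ≤
            ENNReal.ofReal C * eLpNorm f 1 (volume.restrict (Set.Icc (0 : ℝ) 1))) ↔
      (∫⁻ t in Set.Ioc (0 : ℝ) 1, ENNReal.ofReal (α t * t ^ (α t - 1))) < ⊤ := by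
  obtain ⟨B, hB⟩ := hbdd
  have hB' : ∀ t ∈ Icc (0 : ℝ) 1, α t ≤ max B 0 := fun t ht => (hB t ht).trans (le_max_left _ _)
  obtain ⟨m, M, hm, hM, hΓ⟩ := exists_pos_bounds_one_div_Gamma (max B 0)
  constructor
  · rintro ⟨C, -, hbound⟩
    refine (setLIntegral_Ioc_le_of_forall_lt fun c hc => setLIntegral_Ioc_le_of_RL_bounded hpos
      (le_max_right B 0) hB' hm (fun a ha haB => (hΓ a ha haB).1) hbound hc).trans_lt ?_
    exact ENNReal.mul_lt_top ENNReal.ofReal_lt_top ENNReal.ofReal_lt_top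
  · intro hJ
    set K := ENNReal.ofReal (M * c₂ / c₁) + ENNReal.ofReal (2 * M) *
      ∫⁻ t in Ioc 0 1, ENNReal.ofReal (α t * t ^ (α t - 1))
    have hK : K ≠ ⊤ := by finiteness
    refine ⟨K.toReal + 1, by positivity, fun f hf => (eLpNorm_RL_le hα hpos hB' hM.le
      (fun a ha haB => (hΓ a ha haB).2) hc₁ hreg hf.1).trans ?_⟩
    gcongr
    exact (ENNReal.le_ofReal_iff_toReal_le hK (by positivity)).2
      (le_add_of_nonneg_right zero_le_one)

/-- **Proposition (criterion for `L_1`-boundedness under a regularity assumption).**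
If `α` is bounded, measurable, a.e. positive and there are `c₁, c₂ > 0` with
`c₁ α(s) ≤ α(t) ≤ c₂ α(s)` whenever `0 ≤ s ≤ t ≤ min(2s,1)`, then `R^{α(·)}` is bounded
on `L_1[0,1]` iff `∫₀¹ α(t) t^{α(t)−1} dt < ∞`. -/
theorem stmt_5 (α : ℝ → ℝ) (hα : Measurable α)
    (hpos : ∀ᵐ t ∂(volume.restrict (Set.Icc (0 : ℝ) 1)), 0 < α t)
    (hbdd : ∃ B : ℝ, ∀ t ∈ Set.Icc (0 : ℝ) 1, α t ≤ B)
    (c₁ c₂ : ℝ) (hc₁ : 0 < c₁) (hc₂ : 0 < c₂)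
    (hreg : ∀ s t : ℝ, 0 ≤ s → s ≤ t → t ≤ min (2 * s) 1 →
      c₁ * α s ≤ α t ∧ α t ≤ c₂ * α s) :
    (∃ C : ℝ, 0 < C ∧
        ∀ f : ℝ → ℝ, MemLp f 1 (volume.restrict (Set.Icc (0 : ℝ) 1)) →
          eLpNorm (RL α f) 1 (volume.restrict (Set.Icc (0 : ℝ) 1)) ≤
            ENNReal.ofReal C * eLpNorm f 1 (volume.restrict (Set.Icc (0 : ℝ) 1))) ↔
      (∫⁻ t in Set.Ioc (0 : ℝ) 1, ENNReal.ofReal (α t * t ^ (α t - 1))) < ⊤ :=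
  stmt_5_general α hα hpos hbdd c₁ c₂ hc₁ hreg
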